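/- If α and β are ε-chains with the same endpoints in a chain connected metric space X, and there exist stringings α̂ of α and β̂ of β that are path homotopic with fixed endpoints, then α and β are ε-homotopic. -/

import Mathlib

noncomputable section
open Metric

variable {X : Type*} [MetricSpace X]

def IsEpsChain (ε : ℝ) (l : List X) : Prop :=
  l ≠ [] ∧ l.Chain' (fun a b => dist a b < ε)

def chainLength : List X → ℝ
  | a :: b :: t => dist a b + chainLength (b :: t)
  | _ => 0

def conc (α β : List X) : List X := α ++ β.tail

def Insertion (α β : List X) : Prop :=
  ∃ (p s : List X) (x : X), p ≠ [] ∧ s ≠ [] ∧ α = p ++ s ∧ β = p ++ x :: s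

def Move (ε : ℝ) (α β : List X) : Prop :=
  IsEpsChain ε α ∧ IsEpsChain ε β ∧ (Insertion α β ∨ Insertion β α)

def EpsHomotopic (ε : ℝ) : List X → List X → Prop :=
  Relation.ReflTransGen (Move ε)

def IsEpsNull (ε : ℝ) (l : List X) : Prop := ∃ x, EpsHomotopic ε l [x]

def IsGeodesicSpace (Y : Type*) [MetricSpace Y] : Prop :=
  ∀ x y : Y, ∃ γ : ℝ → Y, γ 0 = x ∧ γ (dist x y) = y ∧
    ∀ s ∈ Set.Icc (0:ℝ) (dist x y), ∀ t ∈ Set.Icc (0:ℝ) (dist x y),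
      dist (γ s) (γ t) = |s - t|

def ChainConnected (Y : Type*) [MetricSpace Y] : Prop :=
  ∀ ε > (0:ℝ), ∀ x y : Y, ∃ l : List Y, IsEpsChain ε l ∧ l.head? = some x ∧ l.getLast? = some y

theorem epsHomotopic_equiv (ε : ℝ) : Equivalence (EpsHomotopic (X := X) ε) := by
  refine ⟨fun _ => Relation.ReflTransGen.refl, ?_, fun h h' => h.trans h'⟩
  intro a b h
  induction h with
  | refl => exact Relation.ReflTransGen.refl
  | tail _ hm ih => exact Relation.ReflTransGen.head ⟨hm.2.1, hm.1, hm.2.2.symm⟩ ih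

/-- A stringing of an ε-chain `α`: a path through the points of `α` in order,
whose segment from `x_i` to `x_{i+1}` lies in `B(x_i, ε)`. -/
def IsStringing (ε : ℝ) {x y : X} (α : List X) (c : Path x y) : Prop :=
  ∃ t : ℕ → ℝ, Monotone t ∧ t 0 = 0 ∧ t (α.length - 1) = 1 ∧
    (∀ (i : ℕ) (hi : i < α.length), c.extend (t i) = α.get ⟨i, hi⟩) ∧
    ∀ (i : ℕ) (hi : i + 1 < α.length), ∀ s ∈ Set.Icc (t i) (t (i + 1)),
      c.extend s ∈ Metric.ball (α.get ⟨i, by omega⟩) ε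

/-! The homotopy `H` from `cα` to `cβ` is sampled along a partition `0 = u₀ < ⋯ < u_N = 1` that
contains all stringing times of `α` and `β` and is fine enough for the uniform continuity of `H`.
Every row `H(s, u₀), …, H(s, u_N)` is then an ε-chain, rows at nearby `s` are ε-homotopic, and as
`I` is connected so are the rows at `s = 0` and `s = 1`. These are ε-homotopic to `α` and `β`,
because the points of a chain and those of its stringing sampled at the partition can be matched
monotonically with matched points ε-close. Both comparisons are instances of one fact: two
ε-chains with a monotone staircase matching of ε-close points are ε-homotopic, by walking down the
staircase and inserting or deleting one point at a time. -/

open Set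

section

variable {ε : ℝ}

lemma IsEpsChain.cons {a : X} {l : List X} (hl : IsEpsChain ε l)
    (ha : ∀ b ∈ l.head?, dist a b < ε) : IsEpsChain ε (a :: l) :=
  ⟨List.cons_ne_nil _ _, List.IsChain.cons hl.2 ha⟩

lemma IsEpsChain.append {l₁ l₂ : List X} (h₁ : IsEpsChain ε l₁) (h₂ : IsEpsChain ε l₂)
    (h : ∀ a ∈ l₁.getLast?, ∀ b ∈ l₂.head?, dist a b < ε) : IsEpsChain ε (l₁ ++ l₂) :=
  ⟨by simp [h₁.1], List.IsChain.append h₁.2 h₂.2 h⟩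

lemma IsEpsChain.left_of_append {l₁ l₂ : List X} (h : IsEpsChain ε (l₁ ++ l₂)) (hl₁ : l₁ ≠ []) :
    IsEpsChain ε l₁ :=
  ⟨hl₁, List.IsChain.left_of_append h.2⟩

lemma IsEpsChain.right_of_append {l₁ l₂ : List X} (h : IsEpsChain ε (l₁ ++ l₂)) (hl₂ : l₂ ≠ []) :
    IsEpsChain ε l₂ :=
  ⟨hl₂, List.IsChain.right_of_append h.2⟩

def listIcc {Y : Type*} (f : ℕ → Y) (i n : ℕ) : List Y := (List.range' i (n + 1 - i)).map f

lemma listIcc_self {Y : Type*} (f : ℕ → Y) (n : ℕ) : listIcc f n n = [f n] := by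
  simp [listIcc]

lemma listIcc_of_lt {Y : Type*} (f : ℕ → Y) {i n : ℕ} (h : i < n) :
    listIcc f i n = f i :: listIcc f (i + 1) n := by
  rw [listIcc, show n + 1 - i = n + 1 - (i + 1) + 1 by omega, List.range'_succ]
  rfl

lemma head?_listIcc {Y : Type*} (f : ℕ → Y) {i n : ℕ} (h : i ≤ n) :
    (listIcc f i n).head? = some (f i) := by
  rcases h.lt_or_eq with h | rfl
  · simp [listIcc_of_lt f h]
  · simp [listIcc_self]

lemma listIcc_ne_nil {Y : Type*} (f : ℕ → Y) {i n : ℕ} (h : i ≤ n) : listIcc f i n ≠ [] := by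
  simpa using congrArg Option.isSome (head?_listIcc f h)

lemma isEpsChain_listIcc {f : ℕ → X} {n : ℕ} (hf : ∀ k < n, dist (f k) (f (k + 1)) < ε)
    {i : ℕ} (hi : i ≤ n) : IsEpsChain ε (listIcc f i n) := by
  induction hi using Nat.decreasingInduction with
  | self => rw [listIcc_self]; exact ⟨List.cons_ne_nil _ _, List.isChain_singleton _⟩
  | of_succ k hk ih =>
    rw [listIcc_of_lt f hk]
    exact ih.cons (by simpa [head?_listIcc f hk] using hf k hk)

lemma eq_listIcc_getD {Y : Type*} {l : List Y} (hl : l ≠ []) (d : Y) :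
    l = listIcc (fun i => l.getD i d) 0 (l.length - 1) := by
  apply List.ext_getElem
  · have := List.length_pos_iff.2 hl
    simp only [listIcc, List.length_map, List.length_range']
    omega
  · intro i h _
    simp [listIcc, List.getElem?_eq_getElem h]

lemma epsHomotopic_insert {p s : List X} (z : X) (hp : p ≠ []) (hs : s ≠ [])
    (h₁ : IsEpsChain ε (p ++ s)) (h₂ : IsEpsChain ε (p ++ z :: s)) :
    EpsHomotopic ε (p ++ s) (p ++ z :: s) :=
  .single ⟨h₁, h₂, .inl ⟨p, s, z, hp, hs, rfl, rfl⟩⟩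

lemma epsHomotopic_erase {p s : List X} (z : X) (hp : p ≠ []) (hs : s ≠ [])
    (h₁ : IsEpsChain ε (p ++ z :: s)) (h₂ : IsEpsChain ε (p ++ s)) :
    EpsHomotopic ε (p ++ z :: s) (p ++ s) :=
  .single ⟨h₁, h₂, .inr ⟨p, s, z, hp, hs, rfl, rfl⟩⟩

/-- A monotone "staircase" correspondence between the points of two lists, running from their
heads to a common last point and pairing only points at distance `< ε`. -/
inductive EpsCoupled (ε : ℝ) : List X → List X → Prop
  | single (z : X) : EpsCoupled ε [z] [z]
  | cons_left {a : X} {α β : List X} :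
      EpsCoupled ε α β → (∀ b ∈ β.head?, dist a b < ε) → EpsCoupled ε (a :: α) β
  | cons_right {b : X} {α β : List X} :
      EpsCoupled ε α β → (∀ a ∈ α.head?, dist a b < ε) → EpsCoupled ε α (b :: β)

namespace EpsCoupled

variable {α β : List X}

lemma ne_nil (h : EpsCoupled ε α β) : α ≠ [] ∧ β ≠ [] := by
  induction h with
  | single => simp
  | cons_left _ _ ih => exact ⟨List.cons_ne_nil _ _, ih.2⟩
  | cons_right _ _ ih => exact ⟨ih.1, List.cons_ne_nil _ _⟩

lemma epsHomotopic_append (h : EpsCoupled ε α β) {p : List X} (hp : p ≠ [])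
    (hα : IsEpsChain ε (p ++ α)) (hβ : IsEpsChain ε (p ++ β)) :
    EpsHomotopic ε (p ++ α) (p ++ β) := by
  induction h generalizing p with
  | single => exact .refl
  | @cons_left a α β hαβ hab ih =>
    rw [List.append_cons] at hα ⊢
    have hpaβ : IsEpsChain ε (p ++ [a] ++ β) :=
      (hα.left_of_append (by simp)).append (hβ.right_of_append hαβ.ne_nil.2) (by simpa using hab)
    refine (ih (by simp) hα hpaβ).trans ?_
    rw [List.append_assoc, List.singleton_append]
    exact epsHomotopic_erase a hp hαβ.ne_nil.2 (by simpa using hpaβ) hβ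
  | @cons_right b α β hαβ hab ih =>
    rw [List.append_cons] at hβ ⊢
    have hpbα : IsEpsChain ε (p ++ [b] ++ α) :=
      (hβ.left_of_append (by simp)).append (hα.right_of_append hαβ.ne_nil.1)
        (by simpa [dist_comm] using hab)
    refine .trans ?_ (ih (by simp) hpbα hβ)
    rw [List.append_assoc, List.singleton_append]
    exact epsHomotopic_insert b hp hαβ.ne_nil.1 hα (by simpa using hpbα)

lemma epsHomotopic (hε : 0 < ε) {a : X} (h : EpsCoupled ε (a :: α) (a :: β))
    (hα : IsEpsChain ε (a :: α)) (hβ : IsEpsChain ε (a :: β)) (hα' : α ≠ []) (hβ' : β ≠ []) :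
    EpsHomotopic ε (a :: α) (a :: β) := by
  have hdup : ∀ {l : List X}, IsEpsChain ε (a :: l) → IsEpsChain ε ([a] ++ a :: l) :=
    fun hl => hl.cons (by simpa using hε)
  exact ((epsHomotopic_insert (p := [a]) a (List.cons_ne_nil _ _) hα' hα (hdup hα)).trans
    (h.epsHomotopic_append (List.cons_ne_nil _ _) (hdup hα) (hdup hβ))).trans
    (epsHomotopic_erase (p := [a]) a (List.cons_ne_nil _ _) hβ' (hdup hβ) hβ)

end EpsCoupled

theorem epsCoupled_listIcc {a g : ℕ → X} {n N : ℕ} {φ : ℕ → ℕ} (hφ : MonotoneOn φ (Iic n))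
    (hφ0 : φ 0 = 0) (hφn : φ n = N) (hlast : a n = g N)
    (hclose : ∀ i < n, ∀ k, φ i ≤ k → k ≤ φ (i + 1) → dist (a i) (g k) < ε) :
    EpsCoupled ε (listIcc a 0 n) (listIcc g 0 N) := by
  have hφN : ∀ i ≤ n, φ i ≤ N := fun i hi => hφn ▸ hφ (mem_Iic.2 hi) (mem_Iic.2 le_rfl) hi
  -- `(i, k)` runs over the staircase, whose row `i` covers the columns `φ i, …, φ (i + 1)`.
  suffices ∀ i ≤ n, ∀ k, φ i ≤ k → k ≤ N → (i < n → k ≤ φ (i + 1)) →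
      EpsCoupled ε (listIcc a i n) (listIcc g k N) from
    this 0 (Nat.zero_le n) 0 hφ0.le (Nat.zero_le N) fun _ => Nat.zero_le _
  intro i hi
  induction hi using Nat.decreasingInduction with
  | self =>
    intro k hk hkN _
    obtain rfl : k = N := le_antisymm hkN (hφn ▸ hk)
    rw [listIcc_self, listIcc_self, hlast]
    exact .single _
  | of_succ i hi ih =>
    rintro k hk - hk'
    replace hk' := hk' hi
    induction hk' using Nat.decreasingInduction with
    | self =>
      rw [listIcc_of_lt a hi]
      refine .cons_left (ih _ le_rfl (hφN _ hi) fun h =>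
        hφ (mem_Iic.2 h.le) (mem_Iic.2 h) (Nat.le_succ _)) ?_
      simpa [head?_listIcc g (hφN _ hi)] using
        hclose i hi _ (hφ (mem_Iic.2 hi.le) (mem_Iic.2 hi) (Nat.le_succ _)) le_rfl
    | of_succ k hk₁ ihk =>
      have hkN : k < N := lt_of_lt_of_le hk₁ (hφN _ hi)
      rw [listIcc_of_lt g hkN]
      refine .cons_right (ihk (hk.trans (Nat.le_succ k))) ?_
      simpa [head?_listIcc a hi.le] using hclose i hi k hk hk₁.le

theorem epsHomotopic_listIcc_of_staircase (hε : 0 < ε) {a g : ℕ → X} {n N : ℕ}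
    (hn : 1 ≤ n) (hN : 1 ≤ N) (ha : ∀ i < n, dist (a i) (a (i + 1)) < ε)
    (hg : ∀ k < N, dist (g k) (g (k + 1)) < ε) {φ : ℕ → ℕ} (hφ : MonotoneOn φ (Iic n))
    (hφ0 : φ 0 = 0) (hφn : φ n = N) (hhead : a 0 = g 0) (hlast : a n = g N)
    (hclose : ∀ i < n, ∀ k, φ i ≤ k → k ≤ φ (i + 1) → dist (a i) (g k) < ε) :
    EpsHomotopic ε (listIcc a 0 n) (listIcc g 0 N) := by
  have hcpl := epsCoupled_listIcc hφ hφ0 hφn hlast hclose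
  have hca := isEpsChain_listIcc ha (Nat.zero_le n)
  have hcg := isEpsChain_listIcc hg (Nat.zero_le N)
  simp only [listIcc_of_lt a hn, listIcc_of_lt g hN, hhead] at hcpl hca hcg ⊢
  exact hcpl.epsHomotopic hε hca hcg (listIcc_ne_nil a hn) (listIcc_ne_nil g hN)

lemma exists_nat_div_mem_Ioo {a b : ℝ} (ha : 0 ≤ a) (hb : b ≤ 1) {M : ℕ} (hM : 0 < M)
    (hab : 1 / (M : ℝ) < b - a) : ∃ r ≤ M, (r : ℝ) / M ∈ Ioo a b := by
  have hM' : (0 : ℝ) < M := Nat.cast_pos.2 hM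
  have hfloor : (⌊a * M⌋₊ : ℝ) ≤ a * M := Nat.floor_le (by positivity)
  have hsmall : 1 / (M : ℝ) * M = 1 := by field_simp
  refine ⟨⌊a * M⌋₊ + 1, ?_, ?_, ?_⟩
  · have : a * M < M := by nlinarith
    have := (Nat.floor_lt (by positivity)).2 this
    omega
  · rw [lt_div_iff₀ hM']; push_cast; exact Nat.lt_floor_add_one _
  · rw [div_lt_iff₀ hM']; push_cast; nlinarith

lemma Finset.exists_strictMonoOn_enum {α : Type*} [LinearOrder α] (T : Finset α)
    (hT : T.Nonempty) : ∃ (N : ℕ) (u : ℕ → α), StrictMonoOn u (Set.Iic N) ∧ u 0 = T.min' hT ∧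
      u N = T.max' hT ∧ (∀ k ≤ N, u k ∈ T) ∧ ∀ z ∈ T, ∃ k ≤ N, u k = z := by
  obtain ⟨N, hN⟩ : ∃ N, T.card = N + 1 := Nat.exists_eq_add_one.2 (Finset.card_pos.2 hT)
  set e := T.orderEmbOfFin hN
  set u : ℕ → α := fun k => if h : k < N + 1 then e ⟨k, h⟩ else T.max' hT
  have he : ∀ k (hk : k ≤ N), u k = e ⟨k, Nat.lt_succ_of_le hk⟩ := fun k hk => dif_pos _
  refine ⟨N, u, ?_, ?_, ?_, ?_, ?_⟩
  · intro k hk k' hk' hkk'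
    rw [he k hk, he k' hk']
    exact e.strictMono hkk'
  · rw [he 0 (Nat.zero_le N)]
    exact T.orderEmbOfFin_zero hN (Nat.succ_pos N)
  · rw [he N le_rfl]
    exact T.orderEmbOfFin_last hN (Nat.succ_pos N)
  · intro k hk
    rw [he k hk]
    exact T.orderEmbOfFin_mem hN _
  · intro z hz
    obtain ⟨j, rfl⟩ : z ∈ Set.range e := by simpa [e] using hz
    exact ⟨j, Nat.le_of_lt_succ j.2, he j (Nat.le_of_lt_succ j.2)⟩

theorem exists_fine_partition (S : Finset ℝ) (hS : ∀ z ∈ S, z ∈ Icc (0 : ℝ) 1) {δ : ℝ}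
    (hδ : 0 < δ) : ∃ (N : ℕ) (u : ℕ → ℝ), StrictMonoOn u (Iic N) ∧ u 0 = 0 ∧ u N = 1 ∧
      (∀ k < N, dist (u k) (u (k + 1)) < δ) ∧ ∀ z ∈ S, ∃ k ≤ N, u k = z := by
  obtain ⟨M, hM⟩ := exists_nat_one_div_lt hδ
  set T := S ∪ (Finset.range (M + 2)).image fun r : ℕ => (r : ℝ) / (M + 1 : ℕ)
  have hgrid : ∀ r ≤ M + 1, (r : ℝ) / (M + 1 : ℕ) ∈ T := fun r hr =>
    Finset.mem_union_right _ (Finset.mem_image_of_mem _ (Finset.mem_range.2 (by omega)))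
  have hT : ∀ z ∈ T, z ∈ Icc (0 : ℝ) 1 := by
    simp only [T, Finset.mem_union, Finset.mem_image, Finset.mem_range]
    rintro z (hz | ⟨r, hr, rfl⟩)
    · exact hS z hz
    · exact ⟨by positivity, div_le_one_of_le₀ (by exact_mod_cast Nat.le_of_lt_succ hr)
        (Nat.cast_nonneg _)⟩
  have h0 : (0 : ℝ) ∈ T := by simpa using hgrid 0 (Nat.zero_le _)
  have h1 : (1 : ℝ) ∈ T := by
    simpa [div_self (Nat.cast_add_one_ne_zero (R := ℝ) M)] using hgrid (M + 1) le_rfl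
  obtain ⟨N, u, hu, hu0, huN, huT, hTu⟩ := T.exists_strictMonoOn_enum ⟨0, h0⟩
  refine ⟨N, u, hu, hu0.trans (le_antisymm (T.min'_le 0 h0) (T.le_min' _ _ fun z hz => (hT z hz).1)),
    huN.trans (le_antisymm (T.max'_le _ _ fun z hz => (hT z hz).2) (T.le_max' 1 h1)),
    fun k hk => ?_, fun z hz => hTu z (Finset.mem_union_left _ hz)⟩
  have hlt : u k < u (k + 1) := hu (mem_Iic.2 hk.le) (mem_Iic.2 hk) (Nat.lt_succ_self k)
  rw [Real.dist_eq, abs_sub_comm, abs_of_pos (sub_pos.2 hlt)]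
  by_contra! hgap
  obtain ⟨r, hr, hr'⟩ := exists_nat_div_mem_Ioo (hT _ (huT k hk.le)).1 (hT _ (huT (k + 1) hk)).2
    (Nat.succ_pos M) (by push_cast; linarith)
  obtain ⟨j, hj, hjr⟩ := hTu _ (hgrid r hr)
  rw [← hjr] at hr'
  have hkj := (hu.lt_iff_lt (mem_Iic.2 hk.le) (mem_Iic.2 hj)).1 hr'.1
  have hjk := (hu.lt_iff_lt (mem_Iic.2 hj) (mem_Iic.2 hk)).1 hr'.2
  omega

/-- The body of `IsStringing`, with the times `t` at which the path passes the chain exposed. -/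
def IsStringingVia (ε : ℝ) {x y : X} (α : List X) (c : Path x y) (t : ℕ → ℝ) : Prop :=
  Monotone t ∧ t 0 = 0 ∧ t (α.length - 1) = 1 ∧
    (∀ (i : ℕ) (hi : i < α.length), c.extend (t i) = α.get ⟨i, hi⟩) ∧
    ∀ (i : ℕ) (hi : i + 1 < α.length), ∀ s ∈ Set.Icc (t i) (t (i + 1)),
      c.extend s ∈ Metric.ball (α.get ⟨i, by omega⟩) ε

theorem IsStringingVia.epsHomotopic_listIcc (hε : 0 < ε) {x y : X} {α : List X}
    {c : Path x y} {t : ℕ → ℝ} (hα : α ≠ []) (h : IsStringingVia ε α c t) {N : ℕ}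
    {u : ℕ → ℝ} (hu : StrictMonoOn u (Iic N)) (hu0 : u 0 = 0) (huN : u N = 1)
    (ht : ∀ i < α.length, ∃ k ≤ N, u k = t i)
    (hfine : ∀ k < N, dist (c.extend (u k)) (c.extend (u (k + 1))) < ε) :
    EpsHomotopic ε α (listIcc (fun k => c.extend (u k)) 0 N) := by
  obtain ⟨htm, ht0, ht1, hpt, hball⟩ := h
  have hlen : 0 < α.length := List.length_pos_iff.2 hα
  rw [eq_listIcc_getD hα x]
  set n := α.length - 1
  set a : ℕ → X := fun i => α.getD i x
  have hpt' : ∀ i ≤ n, c.extend (t i) = a i := fun i hi => by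
    simp [a, hpt i (by omega), List.getElem?_eq_getElem (show i < α.length by omega)]
  have hball' : ∀ i < n, ∀ s ∈ Icc (t i) (t (i + 1)), dist (a i) (c.extend s) < ε :=
    fun i hi s hs => by
      simpa [a, dist_comm, List.getElem?_eq_getElem (show i < α.length by omega)] using
        hball i (by omega) s hs
  have hn : 1 ≤ n := by
    by_contra hn
    simp [show n = 0 by omega, ht0] at ht1
  have hN : 1 ≤ N := by
    by_contra hN
    simp [show N = 0 by omega, hu0] at huN
  choose! φ hφN hφ using ht
  have hφ_eq : ∀ i ≤ n, ∀ k ≤ N, u k = t i → φ i = k := fun i hi k hk hk' =>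
    hu.injOn (mem_Iic.2 (hφN i (by omega))) (mem_Iic.2 hk) ((hφ i (by omega)).trans hk'.symm)
  refine epsHomotopic_listIcc_of_staircase hε hn hN
    (fun i hi => hpt' (i + 1) hi ▸ hball' i hi _ ⟨htm (Nat.le_succ i), le_rfl⟩) hfine
    (φ := φ) ?_ (hφ_eq 0 (Nat.zero_le n) 0 (Nat.zero_le N) (hu0.trans ht0.symm))
    (hφ_eq n le_rfl N le_rfl (huN.trans ht1.symm)) ?_ ?_ ?_
  · intro i hi j hj hij
    have hi' : i < α.length := by rw [mem_Iic] at hi; omega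
    have hj' : j < α.length := by rw [mem_Iic] at hj; omega
    rw [← hu.le_iff_le (mem_Iic.2 (hφN i hi')) (mem_Iic.2 (hφN j hj')), hφ i hi', hφ j hj']
    exact htm hij
  · rw [← hpt' 0 (Nat.zero_le n), ht0, hu0]
  · rw [← hpt' n le_rfl, ht1, huN]
  · intro i hi k hk₁ hk₂
    apply hball' i hi
    have hk : k ∈ Iic N := mem_Iic.2 (hk₂.trans (hφN (i + 1) (by omega)))
    rw [← hφ i (by omega), ← hφ (i + 1) (by omega)]
    exact ⟨hu.monotoneOn (mem_Iic.2 (hφN i (by omega))) hk hk₁,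
      hu.monotoneOn hk (mem_Iic.2 (hφN (i + 1) (by omega))) hk₂⟩

theorem IsStringingVia.mem_Icc {x y : X} {α : List X} {c : Path x y} {t : ℕ → ℝ}
    (h : IsStringingVia ε α c t) {i : ℕ} (hi : i < α.length) : t i ∈ Icc (0 : ℝ) 1 :=
  ⟨h.2.1 ▸ h.1 (Nat.zero_le i), h.2.2.1 ▸ h.1 (Nat.le_sub_one_of_lt hi)⟩

open unitInterval in
theorem Path.Homotopy.exists_dist_extend_lt {x y : X} {c₀ c₁ : Path x y} (H : c₀.Homotopy c₁)
    (hε : 0 < ε) : ∃ δ > 0, ∀ (s s' : I) (a b : ℝ), dist s s' < δ → dist a b < δ →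
      dist ((H.eval s).extend a) ((H.eval s').extend b) < ε := by
  obtain ⟨δ, hδ, hH⟩ := Metric.uniformContinuous_iff.1
    (CompactSpace.uniformContinuous_of_continuous H.continuous) ε hε
  refine ⟨δ, hδ, fun s s' a b hs hab => hH ?_⟩
  rw [Prod.dist_eq, max_lt_iff, Subtype.dist_eq, Real.dist_eq]
  exact ⟨hs, (abs_projIcc_sub_projIcc zero_le_one).trans_lt hab⟩

theorem epsHomotopic_listIcc_extend_of_uniform {T : Type*} [PseudoMetricSpace T]
    [PreconnectedSpace T] (hε : 0 < ε) {x y : X} {γ : T → Path x y} {δ : ℝ}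
    (hγ : ∀ s s' a b, dist s s' < δ → dist a b < δ → dist ((γ s).extend a) ((γ s').extend b) < ε)
    {N : ℕ} {u : ℕ → ℝ} (hu0 : u 0 = 0) (huN : u N = 1)
    (hu : ∀ k < N, dist (u k) (u (k + 1)) < δ) (s s' : T) :
    EpsHomotopic ε (listIcc (fun k => (γ s).extend (u k)) 0 N)
      (listIcc (fun k => (γ s').extend (u k)) 0 N) := by
  have hN : 1 ≤ N := by
    by_contra hN
    simp [show N = 0 by omega, hu0] at huN
  have hδ : 0 < δ := dist_nonneg.trans_lt (hu 0 hN)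
  have hrow : ∀ s, ∀ k < N, dist ((γ s).extend (u k)) ((γ s).extend (u (k + 1))) < ε :=
    fun s k hk => hγ s s _ _ (by simpa using hδ) (hu k hk)
  have hstep : ∀ s s', dist s s' < δ → EpsHomotopic ε (listIcc (fun k => (γ s).extend (u k)) 0 N)
      (listIcc (fun k => (γ s').extend (u k)) 0 N) := by
    intro s s' hss'
    refine epsHomotopic_listIcc_of_staircase hε hN hN (hrow s) (hrow s') (φ := id)
      monotoneOn_id rfl rfl (by simp [hu0]) (by simp [huN]) fun i hi k hk₁ hk₂ => hγ s s' _ _ hss' ?_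
    obtain rfl | rfl : k = i ∨ k = i + 1 := by rw [id] at hk₁ hk₂; omega
    · simpa using hδ
    · exact hu i hi
  refine PreconnectedSpace.induction₂'
    (fun s s' => EpsHomotopic ε (listIcc (fun k => (γ s).extend (u k)) 0 N)
      (listIcc (fun k => (γ s').extend (u k)) 0 N))
    (fun s => ?_) ⟨fun _ _ _ => Relation.ReflTransGen.trans⟩ s s'
  filter_upwards [Metric.ball_mem_nhds s hδ] with s' hs'
  exact ⟨hstep s s' (by rwa [dist_comm]), hstep s' s hs'⟩

end

theorem statement16_general (ε : ℝ) (hε : 0 < ε) {x y : X}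
    (α β : List X) (hα : IsEpsChain ε α) (hβ : IsEpsChain ε β)
    (cα cβ : Path x y) (hsα : IsStringing ε α cα) (hsβ : IsStringing ε β cβ)
    (hhom : cα.Homotopic cβ) :
    EpsHomotopic ε α β := by
  obtain ⟨tα, htα⟩ : ∃ t, IsStringingVia ε α cα t := hsα
  obtain ⟨tβ, htβ⟩ : ∃ t, IsStringingVia ε β cβ t := hsβ
  obtain ⟨H⟩ := hhom
  obtain ⟨δ, hδ, hH⟩ := H.exists_dist_extend_lt hε
  set S := (Finset.range α.length).image tα ∪ (Finset.range β.length).image tβ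
  have hS : ∀ z ∈ S, z ∈ Icc (0 : ℝ) 1 := by
    simp only [S, Finset.mem_union, Finset.mem_image, Finset.mem_range]
    rintro _ (⟨i, hi, rfl⟩ | ⟨i, hi, rfl⟩)
    exacts [htα.mem_Icc hi, htβ.mem_Icc hi]
  obtain ⟨N, u, hu, hu0, huN, hmesh, hSu⟩ := exists_fine_partition S hS hδ
  have hrow : ∀ s, ∀ k < N, dist ((H.eval s).extend (u k)) ((H.eval s).extend (u (k + 1))) < ε :=
    fun s k hk => hH s s _ _ (by simpa using hδ) (hmesh k hk)
  have hα' : EpsHomotopic ε α (listIcc (fun k => cα.extend (u k)) 0 N) :=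
    htα.epsHomotopic_listIcc hε hα.1 hu hu0 huN
      (fun i hi => hSu _ (Finset.mem_union_left _ (Finset.mem_image_of_mem _ (Finset.mem_range.2 hi))))
      (H.eval_zero ▸ hrow 0)
  have hβ' : EpsHomotopic ε β (listIcc (fun k => cβ.extend (u k)) 0 N) :=
    htβ.epsHomotopic_listIcc hε hβ.1 hu hu0 huN
      (fun i hi => hSu _ (Finset.mem_union_right _ (Finset.mem_image_of_mem _ (Finset.mem_range.2 hi))))
      (H.eval_one ▸ hrow 1)
  have hrows := epsHomotopic_listIcc_extend_of_uniform hε hH hu0 huN hmesh 0 1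
  rw [H.eval_zero, H.eval_one] at hrows
  exact (hα'.trans hrows).trans ((epsHomotopic_equiv ε).symm hβ')

/-- If chains admit path-homotopic stringings, they are ε-homotopic. -/
theorem statement16 (hX : ChainConnected X) (ε : ℝ) (hε : 0 < ε) {x y : X}
    (α β : List X) (hα : IsEpsChain ε α) (hβ : IsEpsChain ε β)
    (hαh : α.head? = some x) (hβh : β.head? = some x)
    (hαl : α.getLast? = some y) (hβl : β.getLast? = some y)
    (cα cβ : Path x y) (hsα : IsStringing ε α cα) (hsβ : IsStringing ε β cβ)
    (hhom : cα.Homotopic cβ) :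
    EpsHomotopic ε α β :=
  statement16_general ε hε α β hα hβ cα cβ hsα hsβ hhom
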